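/- arXiv:2501.17877 — 2 statements merged into one kernel-verified Lean document; each statement's English description precedes it below -/
import Mathlib

section
/- Let (X, μ) be a measure space with finite total mass m₀ := μ(X) ∈ (0, ∞), let p ≥ 2 be real, and let v : X → ℝ be a function in L^p(μ) with ∫_X v dμ = 0 and v not identically zero in L^p(μ). Define φ : ℝ → ℝ by φ(t) := (∫_X |1 + t v|^p dμ)^{2/p}. Then φ(0) = m₀^{2/p}, φ is twice differentiable with φ'(0) = 0, and for every t ∈ ℝ the second derivative satisfies φ''(t) ≤ 2(p−1) (∫_X |v|^p dμ)^{2/p}. -/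
open MeasureTheory Real
open scoped ENNReal

/-!
With `ψ t = ∫ |1 + t v|^p`, both `ψ'` and `ψ''` are computed by differentiating under the
integral sign: for `|t - t₀| < 1` the `t`-derivatives of the integrands are dominated by a
multiple of `(1 + (|t₀| + 1) |v|)^p`, which is integrable since `μ` is finite and `v ∈ Lᵖ`.
For `φ = ψ^(2/p)` the chain rule gives
`φ'' = (2/p) ψ^(2/p-1) ψ'' + (2/p)(2/p - 1) ψ^(2/p-2) ψ'^2`, whose second term is `≤ 0` as `p ≥ 2`.
Hölder's inequality with exponents `p/(p-2)` and `p/2` bounds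
`ψ'' = p(p-1) ∫ |1 + t v|^(p-2) v^2` by `p(p-1) ψ^((p-2)/p) ‖v‖ₚ^2`, and the powers of `ψ` cancel.
Finally `ψ > 0` because `∫ (1 + t v) = m₀ ≠ 0`, and `ψ'(0) = p ∫ v = 0`.
-/

theorem hasDerivAt_abs_rpow_mul_self {q : ℝ} (hq : 0 ≤ q) (x : ℝ) :
    HasDerivAt (fun b : ℝ => |b| ^ q * b) ((q + 1) * |x| ^ q) x := by
  refine hasDerivAt_of_hasDerivAt_of_ne' (g := fun b => (q + 1) * |b| ^ q) (x := 0)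
    (fun y hy => ?_) (by fun_prop (disch := simp [hq])) (by fun_prop (disch := simp [hq])) x
  have h : HasDerivAt (fun b : ℝ => |b| ^ q * b)
      (SignType.sign y * q * |y| ^ (q - 1) * y + |y| ^ q * 1) y :=
    ((hasDerivAt_abs hy).rpow_const (Or.inl (abs_ne_zero.2 hy))).mul (hasDerivAt_id y)
  refine h.congr_deriv ?_
  have h1 : |y| ^ (q - 1) * |y| = |y| ^ q := by
    rw [← rpow_add_one (abs_ne_zero.2 hy), sub_add_cancel]
  calc _ = q * (|y| ^ (q - 1) * (SignType.sign y * y)) + |y| ^ q := by ring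
    _ = _ := by rw [sign_mul_self, h1]; ring

theorem abs_comp_add_mul_mul_pow_le {g' : ℝ → ℝ} {C r : ℝ} (hr : 0 ≤ r)
    (hg' : ∀ b, |g' b| ≤ C * |b| ^ r) (n : ℕ) {a t c y : ℝ} (ht : |t| ≤ c) (hc : 1 ≤ c) :
    |g' (a + t * y) * y ^ (n + 1)| ≤ C * (|a| + c * |y|) ^ (r + (n + 1 : ℕ)) := by
  have hC : 0 ≤ C := by simpa using (abs_nonneg _).trans (hg' 1)
  have hy : |y| ≤ |a| + c * |y| := by nlinarith [abs_nonneg a, abs_nonneg y]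
  have hay : |a + t * y| ≤ |a| + c * |y| := by
    calc |a + t * y| ≤ |a| + |t| * |y| := by simpa [abs_mul] using abs_add_le a (t * y)
      _ ≤ |a| + c * |y| := by gcongr
  rw [abs_mul, abs_pow, rpow_add_natCast' (by positivity) (by positivity), ← mul_assoc]
  gcongr
  calc |g' (a + t * y)| ≤ C * |a + t * y| ^ r := hg' _
    _ ≤ C * (|a| + c * |y|) ^ r := by gcongr

section

variable {X : Type*} [MeasurableSpace X] {μ : Measure X}

theorem integral_abs_rpow_mul_sq_le {p : ℝ} (hp : 2 ≤ p) {w v : X → ℝ}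
    (hw : MemLp w (ENNReal.ofReal p) μ) (hv : MemLp v (ENNReal.ofReal p) μ) :
    ∫ x, |w x| ^ (p - 2) * v x ^ 2 ∂μ ≤
      (∫ x, |w x| ^ p ∂μ) ^ ((p - 2) / p) * (∫ x, |v x| ^ p ∂μ) ^ (2 / p) := by
  obtain rfl | hp2 := hp.eq_or_lt
  · simp [sq_abs]
  have hp0 : 0 < p := by linarith
  have hpq : (p / (p - 2)).HolderConjugate (p / 2) :=
    Real.holderConjugate_iff.2 ⟨by rw [one_lt_div] <;> linarith, by field_simp; ring⟩
  have hf : MemLp (fun x => |w x| ^ (p - 2)) (ENNReal.ofReal (p / (p - 2))) μ := by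
    have := hw.norm_rpow_div (ENNReal.ofReal (p - 2))
    rwa [ENNReal.toReal_ofReal (by linarith), ← ENNReal.ofReal_div_of_pos (by linarith)] at this
  have hg : MemLp (fun x => v x ^ 2) (ENNReal.ofReal (p / 2)) μ := by
    have := hv.norm_rpow_div (ENNReal.ofReal 2)
    rw [ENNReal.toReal_ofReal zero_le_two, ← ENNReal.ofReal_div_of_pos two_pos] at this
    simpa using this
  have h := integral_mul_le_Lp_mul_Lq_of_nonneg hpq (ae_of_all _ fun x => by positivity)
    (ae_of_all _ fun x => sq_nonneg (v x)) hf hg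
  have hw_int : ∀ x, (|w x| ^ (p - 2)) ^ (p / (p - 2)) = |w x| ^ p := fun x => by
    rw [← rpow_mul (abs_nonneg _), mul_div_cancel₀ _ (by linarith)]
  have hv_int : ∀ x, (v x ^ 2) ^ (p / 2) = |v x| ^ p := fun x => by
    rw [← sq_abs, ← rpow_natCast, ← rpow_mul (abs_nonneg _)]
    norm_num [mul_div_cancel₀]
  simpa only [hw_int, hv_int, one_div_div] using h

theorem integral_abs_rpow_pos_of_integral_ne_zero {p : ℝ} (hp : 0 < p) {f : X → ℝ}
    (hfp : Integrable (fun x => |f x| ^ p) μ) (hf : ∫ x, f x ∂μ ≠ 0) :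
    0 < ∫ x, |f x| ^ p ∂μ := by
  refine (integral_nonneg fun x => by positivity).lt_of_ne fun h => hf ?_
  have h0 : (fun x => |f x| ^ p) =ᵐ[μ] 0 :=
    (integral_eq_zero_iff_of_nonneg (fun x => by positivity) hfp).1 h.symm
  refine integral_eq_zero_of_ae (h0.mono fun x hx => ?_)
  simpa [hp.ne'] using hx

theorem rpow_two_div_second_deriv_le {p y y' y'' N : ℝ} (hp : 2 ≤ p) (hy : 0 < y)
    (hy'' : y'' ≤ p * (p - 1) * (y ^ ((p - 2) / p) * N)) :
    y'' * (2 / p) * y ^ (2 / p - 1) + y' * (2 / p) * (y' * (2 / p - 1) * y ^ (2 / p - 1 - 1))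
      ≤ 2 * (p - 1) * N := by
  have hp0 : 0 < p := by linarith
  have hconcave : y' * (2 / p) * (y' * (2 / p - 1) * y ^ (2 / p - 1 - 1)) ≤ 0 := by
    have h2p : 2 / p - 1 ≤ 0 := by rw [sub_nonpos, div_le_one hp0]; exact hp
    have : 0 ≤ y' ^ 2 * (2 / p) * y ^ (2 / p - 1 - 1) := by positivity
    nlinarith
  have hcancel : y ^ ((p - 2) / p) * y ^ (2 / p - 1) = 1 := by
    rw [← rpow_add hy, show (p - 2) / p + (2 / p - 1) = 0 by field_simp; ring, rpow_zero]
  have hmain : y'' * (2 / p) * y ^ (2 / p - 1) ≤ 2 * (p - 1) * N :=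
    calc y'' * (2 / p) * y ^ (2 / p - 1)
        ≤ p * (p - 1) * (y ^ ((p - 2) / p) * N) * (2 / p) * y ^ (2 / p - 1) := by
          gcongr
      _ = 2 * (p - 1) * N * (y ^ ((p - 2) / p) * y ^ (2 / p - 1)) := by field_simp
      _ = 2 * (p - 1) * N := by rw [hcancel, mul_one]
  linarith

variable [IsFiniteMeasure μ]

theorem MeasureTheory.MemLp.integrable_abs_rpow {f : X → ℝ} {p : ℝ} (hp : 0 ≤ p)
    (hf : MemLp f (ENNReal.ofReal p) μ) : Integrable (fun x => |f x| ^ p) μ := by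
  simpa [ENNReal.toReal_ofReal hp] using hf.integrable_norm_rpow'

theorem MeasureTheory.MemLp.one_add_mul {v : X → ℝ} {p : ℝ≥0∞} (hv : MemLp v p μ) (t : ℝ) :
    MemLp (fun x => 1 + t * v x) p μ :=
  (memLp_const (1 : ℝ)).add (hv.const_mul t)

theorem hasDerivAt_integral_comp_add_mul_mul_pow {g g' : ℝ → ℝ} {C r q : ℝ}
    (hg : ∀ b, HasDerivAt g (g' b) b) (hg'_cont : Continuous g')
    (hg'_le : ∀ b, |g' b| ≤ C * |b| ^ r) (hr : 0 ≤ r) {v : X → ℝ}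
    (hv : MemLp v (ENNReal.ofReal q) μ) (n : ℕ) (hq : r + (n + 1 : ℕ) ≤ q) (a t₀ : ℝ)
    (hint : Integrable (fun x => g (a + t₀ * v x) * v x ^ n) μ) :
    Integrable (fun x => g' (a + t₀ * v x) * v x ^ (n + 1)) μ ∧
      HasDerivAt (fun t => ∫ x, g (a + t * v x) * v x ^ n ∂μ)
        (∫ x, g' (a + t₀ * v x) * v x ^ (n + 1) ∂μ) t₀ := by
  have hg_cont : Continuous g := continuous_iff_continuousAt.2 fun b => (hg b).continuousAt
  set c := |t₀| + 1
  have hc : 1 ≤ c := by simp [c]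
  have hr' : 0 ≤ r + (n + 1 : ℕ) := by positivity
  have hdom : Integrable (fun x => C * (|a| + c * |v x|) ^ (r + (n + 1 : ℕ))) μ := by
    have hv' : MemLp (fun x => |v x|) (ENNReal.ofReal (r + (n + 1 : ℕ))) μ :=
      (hv.mono_exponent (ENNReal.ofReal_le_ofReal hq)).abs
    have hmem : MemLp (fun x => |a| + c * |v x|) (ENNReal.ofReal (r + (n + 1 : ℕ))) μ :=
      (memLp_const |a|).add (hv'.const_mul c)
    refine (hmem.integrable_norm_rpow'.congr (ae_of_all _ fun x => ?_)).const_mul C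
    simp only [ENNReal.toReal_ofReal hr', norm_of_nonneg (by positivity : 0 ≤ |a| + c * |v x|)]
  refine hasDerivAt_integral_of_dominated_loc_of_deriv_le
    (F := fun t x => g (a + t * v x) * v x ^ n) (F' := fun t x => g' (a + t * v x) * v x ^ (n + 1))
    (Metric.ball_mem_nhds t₀ one_pos)
    (Filter.Eventually.of_forall fun t => ?_) hint ?_ (ae_of_all _ fun x t ht => ?_) hdom
    (ae_of_all _ fun x t _ => ?_)
  · exact ((hg_cont.comp (continuous_const_add a |>.comp (continuous_const_mul t))
      ).comp_aestronglyMeasurable hv.1).mul (hv.1.pow n)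
  · exact ((hg'_cont.comp (continuous_const_add a |>.comp (continuous_const_mul t₀))
      ).comp_aestronglyMeasurable hv.1).mul (hv.1.pow (n + 1))
  · have ht' : |t| ≤ c := by
      have := abs_sub_abs_le_abs_sub t t₀
      rw [Metric.mem_ball, dist_eq] at ht
      linarith
    exact abs_comp_add_mul_mul_pow_le hr hg'_le n ht' hc
  · have h := ((hg (a + t * v x)).comp t ((hasDerivAt_mul_const (v x)).const_add a)).mul_const
      (v x ^ n)
    exact h.congr_deriv (by ring)

theorem hasDerivAt_integral_abs_one_add_mul_rpow {p : ℝ} (hp : 2 ≤ p) {v : X → ℝ}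
    (hv : MemLp v (ENNReal.ofReal p) μ) (t₀ : ℝ) :
    Integrable (fun x => p * |1 + t₀ * v x| ^ (p - 2) * (1 + t₀ * v x) * v x) μ ∧
      HasDerivAt (fun t => ∫ x, |1 + t * v x| ^ p ∂μ)
        (∫ x, p * |1 + t₀ * v x| ^ (p - 2) * (1 + t₀ * v x) * v x ∂μ) t₀ := by
  have hint : Integrable (fun x => |1 + t₀ * v x| ^ p * v x ^ 0) μ := by
    simpa using (hv.one_add_mul t₀).integrable_abs_rpow (by linarith)
  have hg'_le (b : ℝ) : |p * |b| ^ (p - 2) * b| ≤ p * |b| ^ (p - 1) := by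
    rw [abs_mul, abs_mul, abs_of_nonneg (by linarith : 0 ≤ p), abs_of_nonneg (by positivity),
      mul_assoc, ← rpow_add_one' (abs_nonneg b) (by linarith), show p - 2 + 1 = p - 1 by ring]
  simpa using hasDerivAt_integral_comp_add_mul_mul_pow
    (fun b => hasDerivAt_abs_rpow b (by linarith)) (by fun_prop (disch := linarith)) hg'_le
    (by linarith) hv 0 (by norm_num) 1 t₀ hint

theorem hasDerivAt_integral_abs_one_add_mul_rpow_deriv {p : ℝ} (hp : 2 ≤ p) {v : X → ℝ}
    (hv : MemLp v (ENNReal.ofReal p) μ) (t₀ : ℝ) :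
    HasDerivAt (fun t => ∫ x, p * |1 + t * v x| ^ (p - 2) * (1 + t * v x) * v x ∂μ)
      (p * (p - 1) * ∫ x, |1 + t₀ * v x| ^ (p - 2) * v x ^ 2 ∂μ) t₀ := by
  have hg (b : ℝ) :
      HasDerivAt (fun b => p * |b| ^ (p - 2) * b) (p * (p - 1) * |b| ^ (p - 2)) b := by
    have h := (hasDerivAt_abs_rpow_mul_self (by linarith : 0 ≤ p - 2) b).const_mul p
    simp only [← mul_assoc] at h
    exact h.congr_deriv (by ring)
  have hp1 : 0 ≤ p - 1 := by linarith
  have hg'_le (b : ℝ) : |p * (p - 1) * |b| ^ (p - 2)| ≤ p * (p - 1) * |b| ^ (p - 2) :=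
    (abs_of_nonneg (by positivity)).le
  have h := (hasDerivAt_integral_comp_add_mul_mul_pow hg (by fun_prop (disch := linarith)) hg'_le
    (by linarith) hv 1 (by norm_num) 1 t₀
    (by simpa using (hasDerivAt_integral_abs_one_add_mul_rpow hp hv t₀).1)).2
  simpa [mul_assoc, integral_const_mul] using h

end

theorem stmt_2_general {X : Type*} [MeasurableSpace X] (μ : Measure X)
    [IsFiniteMeasure μ] (m₀ : ℝ) (hm₀ : m₀ = (μ Set.univ).toReal)
    (hm₀pos : 0 < m₀) (p : ℝ) (hp : 2 ≤ p) (v : X → ℝ)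
    (hv : MemLp v (ENNReal.ofReal p) μ)
    (hmean : ∫ x, v x ∂μ = 0) :
    ∃ φ' φ'' : ℝ → ℝ,
      (∀ t : ℝ, HasDerivAt (fun s : ℝ => (∫ x, |1 + s * v x| ^ p ∂μ) ^ (2 / p)) (φ' t) t) ∧
      (∀ t : ℝ, HasDerivAt φ' (φ'' t) t) ∧
      (∫ x, |1 + (0 : ℝ) * v x| ^ p ∂μ) ^ (2 / p) = m₀ ^ (2 / p) ∧
      φ' 0 = 0 ∧
      (∀ t : ℝ, φ'' t ≤ 2 * (p - 1) * (∫ x, |v x| ^ p ∂μ) ^ (2 / p)) := by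
  set ψ := fun t => ∫ x, |1 + t * v x| ^ p ∂μ
  set ψ' := fun t => ∫ x, p * |1 + t * v x| ^ (p - 2) * (1 + t * v x) * v x ∂μ
  set ψ'' := fun t => p * (p - 1) * ∫ x, |1 + t * v x| ^ (p - 2) * v x ^ 2 ∂μ
  have hψ (t : ℝ) : HasDerivAt ψ (ψ' t) t := (hasDerivAt_integral_abs_one_add_mul_rpow hp hv t).2
  have hψ' (t : ℝ) : HasDerivAt ψ' (ψ'' t) t :=
    hasDerivAt_integral_abs_one_add_mul_rpow_deriv hp hv t
  have hv₁ : Integrable v μ := hv.integrable (by simpa using hp.trans' one_le_two)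
  have hψ_pos (t : ℝ) : 0 < ψ t := by
    refine integral_abs_rpow_pos_of_integral_ne_zero (by linarith) ?_ ?_
    · exact (hv.one_add_mul t).integrable_abs_rpow (by linarith)
    · rw [integral_add (integrable_const 1) (hv₁.const_mul t), integral_const_mul, hmean]
      simpa [hm₀, measureReal_def] using hm₀pos.ne'
  refine ⟨fun t => ψ' t * (2 / p) * ψ t ^ (2 / p - 1),
    fun t => ψ'' t * (2 / p) * ψ t ^ (2 / p - 1) +
      ψ' t * (2 / p) * (ψ' t * (2 / p - 1) * ψ t ^ (2 / p - 1 - 1)),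
    fun t => (hψ t).rpow_const (.inl (hψ_pos t).ne'),
    fun t => ((hψ' t).mul_const _).mul ((hψ t).rpow_const (.inl (hψ_pos t).ne')), ?_, ?_,
    fun t => rpow_two_div_second_deriv_le hp (hψ_pos t) ?_⟩
  · simp [hm₀, measureReal_def]
  · simp [ψ', integral_const_mul, hmean]
  · exact mul_le_mul_of_nonneg_left (integral_abs_rpow_mul_sq_le hp (hv.one_add_mul t) hv)
      (mul_nonneg (by linarith) (by linarith))

theorem stmt_2 {X : Type*} [MeasurableSpace X] (μ : Measure X)
    [IsFiniteMeasure μ] (m₀ : ℝ) (hm₀ : m₀ = (μ Set.univ).toReal)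
    (hm₀pos : 0 < m₀) (p : ℝ) (hp : 2 ≤ p) (v : X → ℝ)
    (hv : MemLp v (ENNReal.ofReal p) μ)
    (hmean : ∫ x, v x ∂μ = 0)
    (hne : ¬ (∀ᵐ x ∂μ, v x = 0)) :
    ∃ φ' φ'' : ℝ → ℝ,
      (∀ t : ℝ, HasDerivAt (fun s : ℝ => (∫ x, |1 + s * v x| ^ p ∂μ) ^ (2 / p)) (φ' t) t) ∧
      (∀ t : ℝ, HasDerivAt φ' (φ'' t) t) ∧
      (∫ x, |1 + (0 : ℝ) * v x| ^ p ∂μ) ^ (2 / p) = m₀ ^ (2 / p) ∧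
      φ' 0 = 0 ∧
      (∀ t : ℝ, φ'' t ≤ 2 * (p - 1) * (∫ x, |v x| ^ p ∂μ) ^ (2 / p)) :=
  stmt_2_general μ m₀ hm₀ hm₀pos p hp v hv hmean
end

section
/- Let (X, μ) be a measure space with finite total mass m₀ := μ(X) ∈ (0, ∞), let p be real with 1 < p < 2, and let v : X → ℝ be a function in L^p(μ) with ∫_X v dμ = 0. If m₀^{1/p} < (p−1) (∫_X |v|^p dμ)^{1/p}, then ∫_X |1 + v|^p dμ ≤ (1 + p (p−1)^{p−1}) ∫_X |v|^p dμ. -/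
/-!
Pointwise, `|1 + t|^p ≤ 1 + p t + (1 + (p-1)^(p-1)) |t|^p` for `1 < p ≤ 2`: for `t ≥ -1` this
comes from comparing derivatives, using the subadditivity of `x ↦ x^(p-1)`, and for `t < -1`
from `|1 + t| ≤ |t|` and the Young-type bound `p s ≤ 1 + (p-1)^(p-1) s^p`. Integrating, the
linear term drops out because `v` has mean zero, leaving `m₀ + (1 + (p-1)^(p-1)) ∫ |v|^p`, and
the case assumption says exactly `m₀ < (p-1)^p ∫ |v|^p`.
-/

open MeasureTheory Real

namespace Real

variable {p : ℝ}

theorem rpow_eq_rpow_sub_one_mul {x : ℝ} (hx : x ≠ 0) (y : ℝ) : x ^ y = x ^ (y - 1) * x := by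
  rw [← rpow_add_one hx, sub_add_cancel]

/-- Bernoulli's inequality at `(p-1) s - 1`. -/
theorem mul_le_one_add_rpow_sub_one_mul_rpow (hp : 1 < p) {s : ℝ} (hs : 0 ≤ s) :
    p * s ≤ 1 + (p - 1) ^ (p - 1) * s ^ p := by
  have hq : 0 < p - 1 := sub_pos.2 hp
  have h := one_add_mul_self_le_rpow_one_add (s := (p - 1) * s - 1) (by nlinarith) hp.le
  rw [add_sub_cancel, mul_rpow hq.le hs, rpow_eq_rpow_sub_one_mul hq.ne'] at h
  nlinarith

theorem one_add_rpow_le (hp1 : 1 < p) (hp2 : p ≤ 2) {t : ℝ} (ht : 0 ≤ t) :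
    (1 + t) ^ p ≤ 1 + p * t + t ^ p := by
  let g : ℝ → ℝ := fun x ↦ 1 + p * x + x ^ p - (1 + x) ^ p
  have hderiv (x : ℝ) :
      HasDerivAt g (p + p * x ^ (p - 1) - p * (1 + x) ^ (p - 1)) x := by
    have hlin := ((hasDerivAt_id x).const_mul p).const_add 1
    have hpow := hasDerivAt_rpow_const (x := x) (Or.inr hp1.le)
    have hshift := (hasDerivAt_rpow_const (x := 1 + x) (Or.inr hp1.le)).comp x
      ((hasDerivAt_id x).const_add 1)
    exact ((hlin.add hpow).sub hshift).congr_deriv (by ring)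
  have hmono : MonotoneOn g (Set.Ici 0) := by
    refine monotoneOn_of_hasDerivWithinAt_nonneg (convex_Ici 0)
      (fun x _ ↦ (hderiv x).continuousAt.continuousWithinAt)
      (fun x _ ↦ (hderiv x).hasDerivWithinAt) fun x hx ↦ ?_
    rw [interior_Ici, Set.mem_Ioi] at hx
    have hsub := rpow_add_le_add_rpow zero_le_one hx.le (by linarith : 0 ≤ p - 1)
      (by linarith : p - 1 ≤ 1)
    rw [one_rpow] at hsub
    nlinarith
  have := hmono Set.self_mem_Ici ht ht
  simp only [g, mul_zero, add_zero, zero_rpow (by linarith : p ≠ 0), one_rpow] at this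
  linarith

theorem one_sub_rpow_le (hp1 : 1 < p) (hp2 : p ≤ 2) {s : ℝ} (hs0 : 0 ≤ s) (hs1 : s ≤ 1) :
    (1 - s) ^ p ≤ 1 - p * s + s ^ p := by
  let g : ℝ → ℝ := fun x ↦ 1 - p * x + x ^ p - (1 - x) ^ p
  have hderiv (x : ℝ) :
      HasDerivAt g (-p + p * x ^ (p - 1) + p * (1 - x) ^ (p - 1)) x := by
    have hlin := ((hasDerivAt_id x).const_mul p).const_sub 1
    have hpow := hasDerivAt_rpow_const (x := x) (Or.inr hp1.le)
    have hreflect := (hasDerivAt_rpow_const (x := 1 - x) (Or.inr hp1.le)).comp x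
      ((hasDerivAt_id x).const_sub 1)
    exact ((hlin.add hpow).sub hreflect).congr_deriv (by ring)
  have hmono : MonotoneOn g (Set.Icc 0 1) := by
    refine monotoneOn_of_hasDerivWithinAt_nonneg (convex_Icc 0 1)
      (fun x _ ↦ (hderiv x).continuousAt.continuousWithinAt)
      (fun x _ ↦ (hderiv x).hasDerivWithinAt) fun x hx ↦ ?_
    rw [interior_Icc, Set.mem_Ioo] at hx
    have hsub := rpow_add_le_add_rpow hx.1.le (by linarith : 0 ≤ 1 - x)
      (by linarith : 0 ≤ p - 1) (by linarith : p - 1 ≤ 1)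
    rw [add_sub_cancel, one_rpow] at hsub
    nlinarith
  have := hmono ⟨le_rfl, zero_le_one⟩ ⟨hs0, hs1⟩ hs0
  simp only [g, mul_zero, sub_zero, add_zero, zero_rpow (by linarith : p ≠ 0), one_rpow] at this
  linarith

theorem abs_one_add_rpow_le (hp1 : 1 < p) (hp2 : p ≤ 2) (t : ℝ) :
    |1 + t| ^ p ≤ 1 + p * t + (1 + (p - 1) ^ (p - 1)) * |t| ^ p := by
  have hq : 0 ≤ (p - 1) ^ (p - 1) := rpow_nonneg (by linarith) _
  have ht : 0 ≤ |t| ^ p := rpow_nonneg (abs_nonneg t) _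
  rcases le_or_gt 0 t with h0 | h0
  · rw [abs_of_nonneg (by linarith : 0 ≤ 1 + t), abs_of_nonneg h0]
    rw [abs_of_nonneg h0] at ht
    nlinarith [one_add_rpow_le hp1 hp2 h0]
  rw [abs_of_neg h0] at ht ⊢
  rcases le_or_gt (-1) t with h1 | h1
  · rw [abs_of_nonneg (by linarith : 0 ≤ 1 + t)]
    have := one_sub_rpow_le hp1 hp2 (neg_nonneg.2 h0.le) (by linarith : -t ≤ 1)
    rw [sub_neg_eq_add] at this
    nlinarith
  · rw [abs_of_neg (by linarith : 1 + t < 0)]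
    have hle : (-(1 + t)) ^ p ≤ (-t) ^ p := rpow_le_rpow (by linarith) (by linarith) (by linarith)
    nlinarith [mul_le_one_add_rpow_sub_one_mul_rpow hp1 (neg_nonneg.2 h0.le)]

end Real

theorem integral_abs_one_add_rpow_le {X : Type*} [MeasurableSpace X] {μ : Measure X}
    [IsFiniteMeasure μ] {p : ℝ} (hp1 : 1 < p) (hp2 : p ≤ 2) {v : X → ℝ}
    (hv : MemLp v (ENNReal.ofReal p) μ) (hmean : ∫ x, v x ∂μ = 0) :
    ∫ x, |1 + v x| ^ p ∂μ ≤
      μ.real Set.univ + (1 + (p - 1) ^ (p - 1)) * ∫ x, |v x| ^ p ∂μ := by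
  have hp0 : 0 < p := by linarith
  have hv_int : Integrable v μ := hv.integrable (by simpa using hp1.le)
  have hv_pow_int : Integrable (fun x ↦ |v x| ^ p) μ := by
    simpa [ENNReal.toReal_ofReal hp0.le] using
      hv.integrable_norm_rpow (by simp [hp0]) ENNReal.ofReal_ne_top
  have hlin_int : Integrable (fun x ↦ 1 + p * v x) μ :=
    (integrable_const 1).add (hv_int.const_mul p)
  calc ∫ x, |1 + v x| ^ p ∂μ
      ≤ ∫ x, (1 + p * v x + (1 + (p - 1) ^ (p - 1)) * |v x| ^ p) ∂μ :=
        integral_mono_of_nonneg (.of_forall fun x ↦ rpow_nonneg (abs_nonneg _) _)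
          (hlin_int.add (hv_pow_int.const_mul _))
          (.of_forall fun x ↦ abs_one_add_rpow_le hp1 hp2 (v x))
    _ = μ.real Set.univ + (1 + (p - 1) ^ (p - 1)) * ∫ x, |v x| ^ p ∂μ := by
        rw [integral_add hlin_int (hv_pow_int.const_mul _),
          integral_add (integrable_const 1) (hv_int.const_mul p), integral_const,
          integral_const_mul, integral_const_mul, hmean]
        simp

theorem stmt_9_general {X : Type*} [MeasurableSpace X] (μ : Measure X)
    [IsFiniteMeasure μ] (m₀ : ℝ) (hm₀ : m₀ = (μ Set.univ).toReal)
    (p : ℝ) (hp1 : 1 < p) (hp2 : p < 2) (v : X → ℝ)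
    (hv : MemLp v (ENNReal.ofReal p) μ)
    (hmean : ∫ x, v x ∂μ = 0)
    (hcase : m₀ ^ (1 / p) < (p - 1) * (∫ x, |v x| ^ p ∂μ) ^ (1 / p)) :
    ∫ x, |1 + v x| ^ p ∂μ ≤
      (1 + p * (p - 1) ^ (p - 1)) * ∫ x, |v x| ^ p ∂μ := by
  set I := ∫ x, |v x| ^ p ∂μ
  have hp0 : 0 < p := by linarith
  have hq : 0 < p - 1 := by linarith
  have hI : 0 ≤ I := integral_nonneg fun x ↦ rpow_nonneg (abs_nonneg _) _
  have hm₀_le : m₀ ≤ (p - 1) ^ p * I := by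
    have hrhs : (p - 1) * I ^ (1 / p) = ((p - 1) ^ p * I) ^ (1 / p) := by
      rw [mul_rpow (rpow_nonneg hq.le _) hI, ← rpow_mul hq.le, mul_one_div_cancel hp0.ne',
        rpow_one]
    rw [hrhs, rpow_lt_rpow_iff (hm₀ ▸ ENNReal.toReal_nonneg) (by positivity) (by positivity)]
      at hcase
    exact hcase.le
  have hint := integral_abs_one_add_rpow_le hp1 hp2.le hv hmean
  rw [measureReal_def, ← hm₀] at hint
  rw [rpow_eq_rpow_sub_one_mul hq.ne'] at hm₀_le
  linear_combination hint + hm₀_le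

theorem stmt_9 {X : Type*} [MeasurableSpace X] (μ : Measure X)
    [IsFiniteMeasure μ] (m₀ : ℝ) (hm₀ : m₀ = (μ Set.univ).toReal)
    (hm₀pos : 0 < m₀) (p : ℝ) (hp1 : 1 < p) (hp2 : p < 2) (v : X → ℝ)
    (hv : MemLp v (ENNReal.ofReal p) μ)
    (hmean : ∫ x, v x ∂μ = 0)
    (hcase : m₀ ^ (1 / p) < (p - 1) * (∫ x, |v x| ^ p ∂μ) ^ (1 / p)) :
    ∫ x, |1 + v x| ^ p ∂μ ≤
      (1 + p * (p - 1) ^ (p - 1)) * ∫ x, |v x| ^ p ∂μ :=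
  stmt_9_general μ m₀ hm₀ p hp1 hp2 v hv hmean hcase
end
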